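/- System W satisfies (Ind): for any consistent belief base with syntax splitting Δ = Δ1 ∪_{Σ1,Σ2} Δ2, for any i, j ∈ {1,2} with i ≠ j, for any propositional formulas A, B over Σ_i and any consistent (satisfiable) propositional formula D over Σ_j, we have A |~_Δ^w B if and only if A∧D |~_Δ^w B. -/
import Mathlib


open scoped Classical

namespace SysW

/-- Propositional formulas over a signature (set of atoms) `V`. -/
inductive PForm (V : Type) : Type
  | var (v : V)
  | tru
  | fls
  | neg (φ : PForm V)
  | conj (φ ψ : PForm V)
  | disj (φ ψ : PForm V)

/-- Evaluation of a formula in a world `ω : V → Bool`. -/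
def PForm.eval {V : Type} (ω : V → Bool) : PForm V → Bool
  | var v => ω v
  | tru => true
  | fls => false
  | neg φ => !(PForm.eval ω φ)
  | conj φ ψ => PForm.eval ω φ && PForm.eval ω ψ
  | disj φ ψ => PForm.eval ω φ || PForm.eval ω ψ

/-- The atoms occurring in a formula. -/
def PForm.vars {V : Type} : PForm V → Set V
  | var v => {v}
  | tru => ∅
  | fls => ∅
  | neg φ => PForm.vars φ
  | conj φ ψ => PForm.vars φ ∪ PForm.vars ψ
  | disj φ ψ => PForm.vars φ ∪ PForm.vars ψ

/-- A conditional (B|A): "if `ante` then usually `cons`". -/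
structure CondRule (V : Type) : Type where
  cons : PForm V
  ante : PForm V

/-- The atoms occurring in a conditional. -/
def condVars {V : Type} (r : CondRule V) : Set V := r.ante.vars ∪ r.cons.vars

/-- `ω` verifies (B|A) iff `ω ⊨ A ∧ B`. -/
def verifies {V : Type} (ω : V → Bool) (r : CondRule V) : Prop :=
  r.ante.eval ω = true ∧ r.cons.eval ω = true

/-- `ω` falsifies (B|A) iff `ω ⊨ A ∧ ¬B`. -/
def falsifies {V : Type} (ω : V → Bool) (r : CondRule V) : Prop :=
  r.ante.eval ω = true ∧ r.cons.eval ω = false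

/-- A conditional `r` is tolerated by a set of conditionals `S` if some world
verifies `r` and falsifies no conditional of `S`. -/
def Tolerated {V : Type} (S : Finset (CondRule V)) (r : CondRule V) : Prop :=
  ∃ ω : V → Bool, verifies ω r ∧ ∀ r' ∈ S, ¬ falsifies ω r'

/-- `rest Δ j` is what remains of `Δ` after removing the first `j` parts
`Δ^0, …, Δ^{j-1}` of the tolerance partition. -/
noncomputable def rest {V : Type} (Δ : Finset (CondRule V)) : ℕ → Finset (CondRule V)
  | 0 => Δ
  | j + 1 => (rest Δ j).filter (fun r => ¬ Tolerated (rest Δ j) r)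

/-- `part Δ j` is the part `Δ^j` of the inclusion-maximal tolerance partition of `Δ`:
the conditionals of `rest Δ j` tolerated by `rest Δ j`. -/
noncomputable def part {V : Type} (Δ : Finset (CondRule V)) (j : ℕ) : Finset (CondRule V) :=
  (rest Δ j).filter (fun r => Tolerated (rest Δ j) r)

/-- `Δ` is consistent iff the tolerance partitioning process exhausts `Δ`. -/
def Consistent {V : Type} (Δ : Finset (CondRule V)) : Prop :=
  ∃ n, rest Δ n = ∅

/-- The tolerance partition of `Δ` is `OP(Δ) = (Δ^0, …, Δ^k)`, i.e. the process
stops exactly after the part with index `k` (all parts `Δ^0, …, Δ^k` nonempty). -/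
def IsOPLength {V : Type} (Δ : Finset (CondRule V)) (k : ℕ) : Prop :=
  rest Δ (k + 1) = ∅ ∧ rest Δ k ≠ ∅

/-- `fpart Δ j ω` = `f_Δ^j(ω)`, the set of conditionals of `Δ^j` falsified by `ω`. -/
noncomputable def fpart {V : Type} (Δ : Finset (CondRule V)) (j : ℕ) (ω : V → Bool) :
    Finset (CondRule V) :=
  (part Δ j).filter (fun r => falsifies ω r)

/-- The preferred structure on worlds `ω ≺_Δ ω'`: there is `m` such that
`f_Δ^i(ω) = f_Δ^i(ω')` for all `i > m` and `f_Δ^m(ω) ⊊ f_Δ^m(ω')`.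
(For `i` beyond the last index `k` of the tolerance partition of a consistent `Δ`,
both sides are empty, so this agrees with the textbook definition.) -/
noncomputable def prefRel {V : Type} (Δ : Finset (CondRule V)) (ω ω' : V → Bool) : Prop :=
  ∃ m : ℕ, (∀ i, m < i → fpart Δ i ω = fpart Δ i ω') ∧ fpart Δ m ω ⊂ fpart Δ m ω'

/-- System W inference `A |~_Δ^w B`: for every world `ω' ⊨ A ∧ ¬B` there is a
world `ω ⊨ A ∧ B` with `ω ≺_Δ ω'`. -/
noncomputable def SysWInf {V : Type} (Δ : Finset (CondRule V)) (A B : PForm V) : Prop :=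
  ∀ ω' : V → Bool, A.eval ω' = true ∧ B.eval ω' = false →
    ∃ ω : V → Bool, (A.eval ω = true ∧ B.eval ω = true) ∧ prefRel Δ ω ω'

/-- `Δ = Δ1 ∪_{Sig1,Sig2} Δ2`: `{Sig1, Sig2}` is a partition of the signature, `{Δ1, Δ2}`
partitions `Δ`, and every conditional of `Δi` uses only atoms from `Σi`. -/
def SyntaxSplitting {V : Type} (Sig1 Sig2 : Set V) (Δ Δ1 Δ2 : Finset (CondRule V)) : Prop :=
  Sig1 ∪ Sig2 = Set.univ ∧ Disjoint Sig1 Sig2 ∧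
  Δ = Δ1 ∪ Δ2 ∧ Disjoint Δ1 Δ2 ∧
  (∀ r ∈ Δ1, condVars r ⊆ Sig1) ∧ (∀ r ∈ Δ2, condVars r ⊆ Sig2)

section Aux

variable {V : Type}

lemma eval_congr (φ : PForm V) {ω ω' : V → Bool}
    (h : ∀ v ∈ φ.vars, ω v = ω' v) : φ.eval ω = φ.eval ω' := by
  induction φ with
  | var v => exact h v rfl
  | tru => rfl
  | fls => rfl
  | neg φ ih => simp only [PForm.eval]; rw [ih h]
  | conj φ ψ ih1 ih2 =>
      simp only [PForm.eval]
      rw [ih1 (fun v hv => h v (Set.mem_union_left _ hv)),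
        ih2 (fun v hv => h v (Set.mem_union_right _ hv))]
  | disj φ ψ ih1 ih2 =>
      simp only [PForm.eval]
      rw [ih1 (fun v hv => h v (Set.mem_union_left _ hv)),
        ih2 (fun v hv => h v (Set.mem_union_right _ hv))]

lemma falsifies_congr {r : CondRule V} {ω ω' : V → Bool}
    (h : ∀ v ∈ condVars r, ω v = ω' v) : falsifies ω r ↔ falsifies ω' r := by
  unfold falsifies
  rw [eval_congr r.ante (fun v hv => h v (Set.mem_union_left _ hv)),
    eval_congr r.cons (fun v hv => h v (Set.mem_union_right _ hv))]

lemma rest_subset (Δ : Finset (CondRule V)) (j : ℕ) : rest Δ j ⊆ Δ := by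
  induction j with
  | zero => exact Finset.Subset.refl _
  | succ j ih => exact (Finset.filter_subset _ _).trans ih

lemma part_subset (Δ : Finset (CondRule V)) (j : ℕ) : part Δ j ⊆ Δ :=
  (Finset.filter_subset _ _).trans (rest_subset Δ j)

/-- The conditionals of `Δi` within `f_Δ^j(ω)`. -/
noncomputable def fcomp (Δ Δi : Finset (CondRule V)) (j : ℕ) (ω : V → Bool) :
    Finset (CondRule V) :=
  (fpart Δ j ω).filter (· ∈ Δi)

lemma fcomp_subset (Δ Δi : Finset (CondRule V)) (j : ℕ) (ω : V → Bool) :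
    fcomp Δ Δi j ω ⊆ Δi := fun r hr => (Finset.mem_filter.mp hr).2

lemma fpart_eq_union {Δ Δ1 Δ2 : Finset (CondRule V)} (hΔ : Δ = Δ1 ∪ Δ2)
    (j : ℕ) (ω : V → Bool) :
    fpart Δ j ω = fcomp Δ Δ1 j ω ∪ fcomp Δ Δ2 j ω := by
  ext r
  simp only [fcomp, Finset.mem_union, Finset.mem_filter]
  constructor
  · intro hr
    have hrΔ : r ∈ Δ := part_subset Δ j (Finset.mem_of_mem_filter r hr)
    rw [hΔ] at hrΔ
    rcases Finset.mem_union.mp hrΔ with h | h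
    · exact Or.inl ⟨hr, h⟩
    · exact Or.inr ⟨hr, h⟩
  · rintro (⟨h, _⟩ | ⟨h, _⟩) <;> exact h

lemma fcomp_congr {Δ Δi : Finset (CondRule V)} {Sig : Set V}
    (hi : ∀ r ∈ Δi, condVars r ⊆ Sig) {ω ω' : V → Bool}
    (hω : ∀ v ∈ Sig, ω v = ω' v) (j : ℕ) :
    fcomp Δ Δi j ω = fcomp Δ Δi j ω' := by
  ext r
  simp only [fcomp, fpart, Finset.mem_filter, and_assoc]
  constructor
  · rintro ⟨hp, hf, hm⟩
    exact ⟨hp, (falsifies_congr (fun v hv => hω v (hi r hm hv))).mp hf, hm⟩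
  · rintro ⟨hp, hf, hm⟩
    exact ⟨hp, (falsifies_congr (fun v hv => hω v (hi r hm hv))).mpr hf, hm⟩

/-- The component preferred relation determined by `Δi ⊆ Δ`. -/
def Rcomp (Δ Δi : Finset (CondRule V)) (ω ω' : V → Bool) : Prop :=
  ∃ m : ℕ, (∀ i, m < i → fcomp Δ Δi i ω = fcomp Δ Δi i ω') ∧
    fcomp Δ Δi m ω ⊂ fcomp Δ Δi m ω'

lemma rcomp_trans {Δ Δi : Finset (CondRule V)} {a b c : V → Bool}
    (h1 : Rcomp Δ Δi a b) (h2 : Rcomp Δ Δi b c) : Rcomp Δ Δi a c := by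
  obtain ⟨m, hab, sab⟩ := h1
  obtain ⟨m', hbc, sbc⟩ := h2
  rcases lt_trichotomy m m' with h | h | h
  · exact ⟨m', fun i hi => (hab i (h.trans hi)).trans (hbc i hi),
      by rw [hab m' h]; exact sbc⟩
  · subst h
    exact ⟨m, fun i hi => (hab i hi).trans (hbc i hi), sab.trans sbc⟩
  · exact ⟨m, fun i hi => (hab i hi).trans (hbc i (h.trans hi)),
      by rw [← hbc m h]; exact sab⟩

lemma rcomp_irrefl {Δ Δi : Finset (CondRule V)} (a : V → Bool) :
    ¬ Rcomp Δ Δi a a := by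
  rintro ⟨m, -, hs⟩
  exact absurd rfl hs.ne

lemma rcomp_wf [Fintype V] (Δ Δi : Finset (CondRule V)) :
    WellFounded (Rcomp Δ Δi) := by
  have h1 : IsTrans (V → Bool) (Rcomp Δ Δi) := ⟨fun _ _ _ => rcomp_trans⟩
  have h2 : IsIrrefl (V → Bool) (Rcomp Δ Δi) := ⟨rcomp_irrefl⟩
  exact Finite.wellFounded_of_trans_of_irrefl _

lemma union_ssubset_left {Δ1 Δ2 s s' t : Finset (CondRule V)}
    (hd : Disjoint Δ1 Δ2) (hs : s ⊆ s') (hne : s ≠ s') (hs' : s' ⊆ Δ1) (ht : t ⊆ Δ2) :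
    s ∪ t ⊂ s' ∪ t := by
  rw [Finset.ssubset_def]
  refine ⟨Finset.union_subset_union_left hs, fun hcon => hne ?_⟩
  apply Finset.Subset.antisymm hs
  intro x hx
  rcases Finset.mem_union.mp (hcon (Finset.mem_union_left _ hx)) with h | h
  · exact h
  · exact absurd (ht h) (Finset.disjoint_left.mp hd (hs' hx))

/-- Main lemma: with a syntax splitting, `A ∧ D |~_Δ^w B` is equivalent to a
condition on `Δ1`-minimal models of `A`, independent of the (satisfiable) `D`. -/
lemma main_iff [Fintype V] (Sig1 Sig2 : Set V) (Δ Δ1 Δ2 : Finset (CondRule V))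
    (hdisj : Disjoint Sig1 Sig2) (hΔ : Δ = Δ1 ∪ Δ2) (hd12 : Disjoint Δ1 Δ2)
    (h1 : ∀ r ∈ Δ1, condVars r ⊆ Sig1) (h2 : ∀ r ∈ Δ2, condVars r ⊆ Sig2)
    (A B D : PForm V) (hA : A.vars ⊆ Sig1) (hB : B.vars ⊆ Sig1) (hD : D.vars ⊆ Sig2)
    (hDsat : ∃ ω, D.eval ω = true) :
    SysWInf Δ (PForm.conj A D) B ↔
      ∀ σ : V → Bool, A.eval σ = true →
        (∀ υ, A.eval υ = true → ¬ Rcomp Δ Δ1 υ σ) → B.eval σ = true := by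
  constructor
  · intro hinf σ hAσ hmin
    by_contra hBσ
    rw [Bool.not_eq_true] at hBσ
    obtain ⟨δ, hδD, hδmin⟩ := (rcomp_wf Δ Δ2).has_min {x | D.eval x = true} hDsat
    set ωs : V → Bool := fun v => if v ∈ Sig1 then σ v else δ v with hωsdef
    have hag1 : ∀ v ∈ Sig1, ωs v = σ v := fun v hv => if_pos hv
    have hag2 : ∀ v ∈ Sig2, ωs v = δ v :=
      fun v hv => if_neg (fun h => Set.disjoint_left.mp hdisj h hv)
    have hAωs : A.eval ωs = true :=
      (eval_congr A (fun v hv => hag1 v (hA hv))).trans hAσ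
    have hBωs : B.eval ωs = false :=
      (eval_congr B (fun v hv => hag1 v (hB hv))).trans hBσ
    have hDωs : D.eval ωs = true :=
      (eval_congr D (fun v hv => hag2 v (hD hv))).trans hδD
    obtain ⟨υ, ⟨hADυ, hBυ⟩, m, hab, hstr⟩ :=
      hinf ωs ⟨by show (A.eval ωs && D.eval ωs) = true; rw [hAωs, hDωs]; rfl, hBωs⟩
    obtain ⟨hAυ, hDυ⟩ : A.eval υ = true ∧ D.eval υ = true := by
      simpa [PForm.eval, Bool.and_eq_true] using hADυ
    have hab1 : ∀ i, m < i → fcomp Δ Δ1 i υ = fcomp Δ Δ1 i ωs := by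
      intro i hi; unfold fcomp; rw [hab i hi]
    have hab2 : ∀ i, m < i → fcomp Δ Δ2 i υ = fcomp Δ Δ2 i ωs := by
      intro i hi; unfold fcomp; rw [hab i hi]
    have hsub1 : fcomp Δ Δ1 m υ ⊆ fcomp Δ Δ1 m ωs := by
      intro r hr
      simp only [fcomp, Finset.mem_filter] at hr ⊢
      exact ⟨hstr.subset hr.1, hr.2⟩
    have hsub2 : fcomp Δ Δ2 m υ ⊆ fcomp Δ Δ2 m ωs := by
      intro r hr
      simp only [fcomp, Finset.mem_filter] at hr ⊢
      exact ⟨hstr.subset hr.1, hr.2⟩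
    by_cases hc : fcomp Δ Δ1 m υ = fcomp Δ Δ1 m ωs
    · have hne2 : fcomp Δ Δ2 m υ ≠ fcomp Δ Δ2 m ωs := by
        intro he
        exact hstr.ne (by rw [fpart_eq_union hΔ, fpart_eq_union hΔ, hc, he])
      have htr : ∀ j, fcomp Δ Δ2 j ωs = fcomp Δ Δ2 j δ := fcomp_congr h2 hag2
      have hR2 : Rcomp Δ Δ2 υ δ := by
        refine ⟨m, fun i hi => (hab2 i hi).trans (htr i), ?_⟩
        rw [← htr m]
        exact Finset.ssubset_def.mpr
          ⟨hsub2, fun hcon => hne2 (Finset.Subset.antisymm hsub2 hcon)⟩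
      exact hδmin υ hDυ hR2
    · have htr : ∀ j, fcomp Δ Δ1 j ωs = fcomp Δ Δ1 j σ := fcomp_congr h1 hag1
      have hR1 : Rcomp Δ Δ1 υ σ := by
        refine ⟨m, fun i hi => (hab1 i hi).trans (htr i), ?_⟩
        rw [← htr m]
        exact Finset.ssubset_def.mpr
          ⟨hsub1, fun hcon => hc (Finset.Subset.antisymm hsub1 hcon)⟩
      exact hmin υ hAυ hR1
  · rintro hrhs ω' ⟨hAD', hB'⟩
    obtain ⟨hA', hD'⟩ : A.eval ω' = true ∧ D.eval ω' = true := by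
      simpa [PForm.eval, Bool.and_eq_true] using hAD'
    obtain ⟨σ, ⟨hAσ, hσor⟩, hσmin⟩ := (rcomp_wf Δ Δ1).has_min
      {x | A.eval x = true ∧ (x = ω' ∨ Rcomp Δ Δ1 x ω')} ⟨ω', hA', Or.inl rfl⟩
    have hMin : ∀ υ, A.eval υ = true → ¬ Rcomp Δ Δ1 υ σ := by
      intro υ hAυ hR
      refine hσmin υ ⟨hAυ, ?_⟩ hR
      rcases hσor with h | h
      · exact Or.inr (h ▸ hR)
      · exact Or.inr (rcomp_trans hR h)
    have hBσ : B.eval σ = true := hrhs σ hAσ hMin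
    have hne : σ ≠ ω' := by
      intro h
      rw [h, hB'] at hBσ
      exact Bool.false_ne_true hBσ
    have hRσ : Rcomp Δ Δ1 σ ω' := hσor.resolve_left hne
    set υ : V → Bool := fun v => if v ∈ Sig1 then σ v else ω' v with hυdef
    have hag1 : ∀ v ∈ Sig1, υ v = σ v := fun v hv => if_pos hv
    have hag2 : ∀ v ∈ Sig2, υ v = ω' v :=
      fun v hv => if_neg (fun h => Set.disjoint_left.mp hdisj h hv)
    have hAυ : A.eval υ = true :=
      (eval_congr A (fun v hv => hag1 v (hA hv))).trans hAσ
    have hBυ : B.eval υ = true :=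
      (eval_congr B (fun v hv => hag1 v (hB hv))).trans hBσ
    have hDυ : D.eval υ = true :=
      (eval_congr D (fun v hv => hag2 v (hD hv))).trans hD'
    refine ⟨υ, ⟨by show (A.eval υ && D.eval υ) = true; rw [hAυ, hDυ]; rfl, hBυ⟩, ?_⟩
    have hf1 : ∀ j, fcomp Δ Δ1 j υ = fcomp Δ Δ1 j σ := fcomp_congr h1 hag1
    have hf2 : ∀ j, fcomp Δ Δ2 j υ = fcomp Δ Δ2 j ω' := fcomp_congr h2 hag2
    obtain ⟨m, hab, hstr⟩ := hRσ
    refine ⟨m, fun i hi => ?_, ?_⟩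
    · rw [fpart_eq_union hΔ, fpart_eq_union hΔ, hf1, hf2, hab i hi]
    · rw [fpart_eq_union hΔ, fpart_eq_union hΔ, hf1, hf2]
      exact union_ssubset_left hd12 hstr.subset hstr.ne
        (fcomp_subset Δ Δ1 m ω') (fcomp_subset Δ Δ2 m ω')

end Aux

end SysW

open SysW in
/-- System W satisfies (Ind): for a consistent belief base
`Δ = Δ1 ∪_{Σ1,Σ2} Δ2` with syntax splitting, for `i ≠ j`, formulas `A, B` over `Σi`
and satisfiable `D` over `Σj`, `A |~_Δ^w B` iff `A ∧ D |~_Δ^w B`. -/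
theorem stmt7 {V : Type} [Fintype V] (Sig1 Sig2 : Set V) (Δ Δ1 Δ2 : Finset (CondRule V))
    (hsplit : SyntaxSplitting Sig1 Sig2 Δ Δ1 Δ2) (hcons : Consistent Δ) :
    (∀ A B D : PForm V, A.vars ⊆ Sig1 → B.vars ⊆ Sig1 → D.vars ⊆ Sig2 →
      (∃ ω : V → Bool, D.eval ω = true) →
      (SysWInf Δ A B ↔ SysWInf Δ (PForm.conj A D) B)) ∧
    (∀ A B D : PForm V, A.vars ⊆ Sig2 → B.vars ⊆ Sig2 → D.vars ⊆ Sig1 →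
      (∃ ω : V → Bool, D.eval ω = true) →
      (SysWInf Δ A B ↔ SysWInf Δ (PForm.conj A D) B)) := by
  obtain ⟨hU, hdisj, hΔ, hd12, h1, h2⟩ := hsplit
  constructor
  · intro A B D hA hB hD hDsat
    have e1 := main_iff Sig1 Sig2 Δ Δ1 Δ2 hdisj hΔ hd12 h1 h2 A B D hA hB hD hDsat
    have e0 := main_iff Sig1 Sig2 Δ Δ1 Δ2 hdisj hΔ hd12 h1 h2 A B PForm.tru hA hB
      (by intro v hv; simp [PForm.vars] at hv) ⟨fun _ => true, rfl⟩
    have etru : SysWInf Δ A B ↔ SysWInf Δ (PForm.conj A PForm.tru) B := by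
      unfold SysWInf
      simp [PForm.eval]
    rw [etru, e0, ← e1]
  · intro A B D hA hB hD hDsat
    have hΔ' : Δ = Δ2 ∪ Δ1 := by rw [hΔ, Finset.union_comm]
    have e1 := main_iff Sig2 Sig1 Δ Δ2 Δ1 hdisj.symm hΔ' hd12.symm h2 h1 A B D hA hB hD hDsat
    have e0 := main_iff Sig2 Sig1 Δ Δ2 Δ1 hdisj.symm hΔ' hd12.symm h2 h1 A B PForm.tru hA hB
      (by intro v hv; simp [PForm.vars] at hv) ⟨fun _ => true, rfl⟩
    have etru : SysWInf Δ A B ↔ SysWInf Δ (PForm.conj A PForm.tru) B := by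
      unfold SysWInf
      simp [PForm.eval]
    rw [etru, e0, ← e1]
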